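/- Let (g,D) be a difference Lie algebra over a field k, (V,ϱ,K) a representation of (g,D), ω: g × g → V an alternating bilinear map and χ: g → V a linear map satisfying the 2-cocycle conditions: for all x,y,z ∈ g, (1) ϱ(x)ω(y,z) − ϱ(y)ω(x,z) + ϱ(z)ω(x,y) − ω(⁅x,y⁆, z) + ω(⁅x,z⁆, y) − ω(⁅y,z⁆, x) = 0, and (2) K(ω(x,y)) + χ(⁅x,y⁆) = ω(D x, y) + ω(x, D y) + ω(D x, D y) + ϱ(x)χ(y) − ϱ(y)χ(x) + ϱ(D x)χ(y) − ϱ(D y)χ(x). Define on g × V the bracket B_ω((x,u),(y,v)) = (⁅x,y⁆, ϱ(x)v − ϱ(y)u + ω(x,y)) and the map D_χ(x,u) = (D x, K u + χ(x)). Then B_ω is alternating and satisfies the Jacobi identity B_ω(B_ω(X,Y),Z) + B_ω(B_ω(Y,Z),X) + B_ω(B_ω(Z,X),Y) = 0 for all X,Y,Z ∈ g × V, and D_χ satisfies D_χ(B_ω(X,Y)) = B_ω(D_χ X, Y) + B_ω(X, D_χ Y) + B_ω(D_χ X, D_χ Y) for all X,Y ∈ g × V; thus (g ⊕ V, B_ω,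 D_χ) is a difference Lie algebra, giving an abelian extension of (g,D) by (V,K). -/

import Mathlib

/-!
In each identity the `g`-component is the corresponding identity of `(g, D)`. In the
`V`-component the representation axioms cancel every term not involving the cochains, as in
the semidirect product `g ⋉ V`, and what remains is exactly cocycle condition (1) for the
Jacobi identity and (2) for the difference operator.
-/

section

variable {k : Type*} [Field k] {g : Type*} [LieRing g] [LieAlgebra k g]
  {V : Type*} [AddCommGroup V] [Module k V]

/-- The bracket on `g × V` twisted by a 2-cochain `ω`:
`B_ω((x,u),(y,v)) = (⁅x,y⁆, ϱ(x)v − ϱ(y)u + ω(x,y))`. -/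
def extBracket (ϱ : g →ₗ[k] Module.End k V) (ω : g → g → V) (X Y : g × V) : g × V :=
  (⁅X.1, Y.1⁆, ϱ X.1 Y.2 - ϱ Y.1 X.2 + ω X.1 Y.1)

/-- The operator on `g × V` twisted by a 1-cochain `χ`: `D_χ(x,u) = (D x, K u + χ(x))`. -/
def extOp (D : g →ₗ[k] g) (K : V →ₗ[k] V) (χ : g → V) (X : g × V) : g × V :=
  (D X.1, K X.2 + χ X.1)

end

section

variable {k : Type*} [Field k] {g : Type*} [LieRing g] [LieAlgebra k g]
  {V : Type*} [AddCommGroup V] [Module k V] (ϱ : g →ₗ[k] Module.End k V)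

theorem extBracket_self {ω : g → g → V} (hω : ∀ x, ω x x = 0) (X : g × V) :
    extBracket ϱ ω X X = 0 := by
  simp [extBracket, hω]

theorem lie_lie_add_lie_lie_add_lie_lie (x y z : g) :
    ⁅⁅x, y⁆, z⁆ + ⁅⁅y, z⁆, x⁆ + ⁅⁅z, x⁆, y⁆ = 0 := by
  rw [← lie_skew ⁅x, y⁆ z, ← lie_skew ⁅y, z⁆ x, ← lie_skew ⁅z, x⁆ y, ← neg_add, ← neg_add,
    neg_eq_zero, add_rotate]
  exact lie_jacobi x y z

theorem extBracket_jacobi (hrep : ∀ x y : g, ϱ ⁅x, y⁆ = ϱ x ∘ₗ ϱ y - ϱ y ∘ₗ ϱ x)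
    {ω : g →ₗ[k] g →ₗ[k] V} (hω : ω.IsAlt)
    (hcocycle : ∀ x y z : g,
      ϱ x (ω y z) - ϱ y (ω x z) + ϱ z (ω x y) -
        ω ⁅x, y⁆ z + ω ⁅x, z⁆ y - ω ⁅y, z⁆ x = 0)
    (X Y Z : g × V) :
    extBracket ϱ (fun a b => ω a b) (extBracket ϱ (fun a b => ω a b) X Y) Z +
      extBracket ϱ (fun a b => ω a b) (extBracket ϱ (fun a b => ω a b) Y Z) X +
      extBracket ϱ (fun a b => ω a b) (extBracket ϱ (fun a b => ω a b) Z X) Y = 0 := by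
  obtain ⟨x, u⟩ := X
  obtain ⟨y, v⟩ := Y
  obtain ⟨z, w⟩ := Z
  refine Prod.ext (lie_lie_add_lie_lie_add_lie_lie x y z) ?_
  simp only [extBracket, Prod.snd_add, Prod.snd_zero, hrep, LinearMap.sub_apply,
    LinearMap.comp_apply, map_add, map_sub, ← lie_skew z x, map_neg, LinearMap.neg_apply,
    ← hω.neg x z]
  rw [← neg_eq_zero, ← hcocycle x y z]
  abel

theorem extOp_extBracket {D : g →ₗ[k] g}
    (hD : ∀ x y : g, D ⁅x, y⁆ = ⁅D x, y⁆ + ⁅x, D y⁆ + ⁅D x, D y⁆)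
    {K : V →ₗ[k] V} (hK : ∀ (x : g) (u : V), K (ϱ x u) = ϱ (D x) u + ϱ x (K u) + ϱ (D x) (K u))
    {ω : g → g → V} {χ : g → V}
    (hcocycle : ∀ x y : g,
      K (ω x y) + χ ⁅x, y⁆ =
        ω (D x) y + ω x (D y) + ω (D x) (D y) +
        ϱ x (χ y) - ϱ y (χ x) + ϱ (D x) (χ y) - ϱ (D y) (χ x))
    (X Y : g × V) :
    extOp D K χ (extBracket ϱ ω X Y) =
      extBracket ϱ ω (extOp D K χ X) Y + extBracket ϱ ω X (extOp D K χ Y) +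
        extBracket ϱ ω (extOp D K χ X) (extOp D K χ Y) := by
  obtain ⟨x, u⟩ := X
  obtain ⟨y, v⟩ := Y
  refine Prod.ext (hD x y) ?_
  have hKω : K (ω x y) = ω (D x) y + ω x (D y) + ω (D x) (D y) +
      ϱ x (χ y) - ϱ y (χ x) + ϱ (D x) (χ y) - ϱ (D y) (χ x) - χ ⁅x, y⁆ :=
    eq_sub_of_add_eq (hcocycle x y)
  simp only [extOp, extBracket, Prod.snd_add, map_add, map_sub, hK, hKω]
  abel

end

/-- Given a 2-cocycle `(ω, χ)` of a difference Lie algebra `(g, D)` with coefficients in a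
representation `(V, ϱ, K)`, the bracket `B_ω` on `g ⊕ V` is alternating and satisfies the
Jacobi identity, and `D_χ` is a difference operator for it; thus `(g ⊕ V, B_ω, D_χ)` is a
difference Lie algebra, an abelian extension of `(g, D)` by `(V, K)`. -/
theorem two_cocycle_gives_abelian_extension {k : Type*} [Field k] {g : Type*}
    [LieRing g] [LieAlgebra k g] {V : Type*} [AddCommGroup V] [Module k V]
    (D : g →ₗ[k] g)
    (hD : ∀ x y : g, D ⁅x, y⁆ = ⁅D x, y⁆ + ⁅x, D y⁆ + ⁅D x, D y⁆)
    (ϱ : g →ₗ[k] Module.End k V)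
    (hrep : ∀ x y : g, ϱ ⁅x, y⁆ = ϱ x ∘ₗ ϱ y - ϱ y ∘ₗ ϱ x)
    (K : V →ₗ[k] V)
    (hK : ∀ (x : g) (u : V), K (ϱ x u) = ϱ (D x) u + ϱ x (K u) + ϱ (D x) (K u))
    (ω : g →ₗ[k] g →ₗ[k] V) (hω : ∀ x : g, ω x x = 0)
    (χ : g →ₗ[k] V)
    (hcocycle1 : ∀ x y z : g,
      ϱ x (ω y z) - ϱ y (ω x z) + ϱ z (ω x y) -
        ω ⁅x, y⁆ z + ω ⁅x, z⁆ y - ω ⁅y, z⁆ x = 0)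
    (hcocycle2 : ∀ x y : g,
      K (ω x y) + χ ⁅x, y⁆ =
        ω (D x) y + ω x (D y) + ω (D x) (D y) +
        ϱ x (χ y) - ϱ y (χ x) + ϱ (D x) (χ y) - ϱ (D y) (χ x)) :
    (∀ X : g × V, extBracket ϱ (fun a b => ω a b) X X = 0) ∧
    (∀ X Y Z : g × V,
      extBracket ϱ (fun a b => ω a b) (extBracket ϱ (fun a b => ω a b) X Y) Z +
      extBracket ϱ (fun a b => ω a b) (extBracket ϱ (fun a b => ω a b) Y Z) X +
      extBracket ϱ (fun a b => ω a b) (extBracket ϱ (fun a b => ω a b) Z X) Y = 0) ∧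
    (∀ X Y : g × V,
      extOp D K ⇑χ (extBracket ϱ (fun a b => ω a b) X Y) =
        extBracket ϱ (fun a b => ω a b) (extOp D K ⇑χ X) Y +
        extBracket ϱ (fun a b => ω a b) X (extOp D K ⇑χ Y) +
        extBracket ϱ (fun a b => ω a b) (extOp D K ⇑χ X) (extOp D K ⇑χ Y)) :=
  ⟨extBracket_self ϱ hω, extBracket_jacobi ϱ hrep hω hcocycle1,
    extOp_extBracket ϱ hD hK hcocycle2⟩
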